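/- Let q : ℝ → ℍ be smooth and nonvanishing and let (γ, V) be its frame-Hopf framed curve. Then the twist rate of (γ, V) satisfies tw(t) = −2·⟨q′(t), i·q(t)⟩_ℍ / |q(t)|⁴ for all t, where ⟨p,r⟩_ℍ = Re(p·conj(r)) is the Euclidean inner product on ℍ ≅ ℝ⁴. -/

import Mathlib

open scoped Quaternion

noncomputable section

/-- The quaternion `i`. -/
def qI : ℍ[ℝ] := ⟨0, 1, 0, 0⟩

/-- The quaternion `j`. -/
def qJ : ℍ[ℝ] := ⟨0, 0, 1, 0⟩

/-- The Euclidean inner product on `ℍ ≅ ℝ⁴`, `⟨p,r⟩ = Re(p·conj(r))`. -/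
def innH (p r : ℍ[ℝ]) : ℝ := (p * star r).re

/-- The identification of the imaginary part of a quaternion with a vector in `ℝ³`. -/
def imPart (p : ℍ[ℝ]) : EuclideanSpace ℝ (Fin 3) := WithLp.toLp 2 ![p.imI, p.imJ, p.imK]

/-- The cross product on `ℝ³`. -/
def cross3 (a b : EuclideanSpace ℝ (Fin 3)) : EuclideanSpace ℝ (Fin 3) :=
  WithLp.toLp 2 ![a 1 * b 2 - a 2 * b 1, a 2 * b 0 - a 0 * b 2, a 0 * b 1 - a 1 * b 0]

/-- The velocity `γ' = conj(q)·i·q` of the frame-Hopf base curve, as a vector in `ℝ³`. -/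
def gammaDeriv (q : ℝ → ℍ[ℝ]) (t : ℝ) : EuclideanSpace ℝ (Fin 3) :=
  imPart (star (q t) * qI * q t)

/-- The frame-Hopf framing `V = conj(q)·j·q / |q|²`, as a vector in `ℝ³`. -/
def frameV (q : ℝ → ℍ[ℝ]) (t : ℝ) : EuclideanSpace ℝ (Fin 3) :=
  (‖q t‖ ^ 2)⁻¹ • imPart (star (q t) * qJ * q t)

/-- The speed `‖γ'‖` of the frame-Hopf base curve. -/
def speed (q : ℝ → ℍ[ℝ]) (t : ℝ) : ℝ := ‖gammaDeriv q t‖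

/-- The twist rate `tw = ⟨D_s V, D_s γ × V⟩`, where `D_s = ‖γ'‖⁻¹ d/dt`. -/
def twistRate (q : ℝ → ℍ[ℝ]) (t : ℝ) : ℝ :=
  inner ℝ ((speed q t)⁻¹ • deriv (frameV q) t)
    (cross3 ((speed q t)⁻¹ • gammaDeriv q t) (frameV q t))


@[simp] lemma qI_re : qI.re = 0 := rfl
@[simp] lemma qI_imI : qI.imI = 1 := rfl
@[simp] lemma qI_imJ : qI.imJ = 0 := rfl
@[simp] lemma qI_imK : qI.imK = 0 := rfl
@[simp] lemma qJ_re : qJ.re = 0 := rfl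
@[simp] lemma qJ_imI : qJ.imI = 0 := rfl
@[simp] lemma qJ_imJ : qJ.imJ = 1 := rfl
@[simp] lemma qJ_imK : qJ.imK = 0 := rfl

/-- `Quaternion.re` as a continuous linear map. -/
def reLM : ℍ[ℝ] →L[ℝ] ℝ := LinearMap.toContinuousLinearMap
  { toFun := QuaternionAlgebra.re, map_add' := fun _ _ => rfl, map_smul' := fun _ _ => rfl }
/-- `Quaternion.imI` as a continuous linear map. -/
def imILM : ℍ[ℝ] →L[ℝ] ℝ := LinearMap.toContinuousLinearMap
  { toFun := QuaternionAlgebra.imI, map_add' := fun _ _ => rfl, map_smul' := fun _ _ => rfl }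
/-- `Quaternion.imJ` as a continuous linear map. -/
def imJLM : ℍ[ℝ] →L[ℝ] ℝ := LinearMap.toContinuousLinearMap
  { toFun := QuaternionAlgebra.imJ, map_add' := fun _ _ => rfl, map_smul' := fun _ _ => rfl }
/-- `Quaternion.imK` as a continuous linear map. -/
def imKLM : ℍ[ℝ] →L[ℝ] ℝ := LinearMap.toContinuousLinearMap
  { toFun := QuaternionAlgebra.imK, map_add' := fun _ _ => rfl, map_smul' := fun _ _ => rfl }

lemma hasDerivAt_E3 {F : ℝ → EuclideanSpace ℝ (Fin 3)} {D : EuclideanSpace ℝ (Fin 3)} {t : ℝ}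
    (h : ∀ i, HasDerivAt (fun s => F s i) (D i) t) : HasDerivAt F D t := by
  have h' : HasDerivAt (fun s (i : Fin 3) => F s i) (fun i => D i) t := hasDerivAt_pi.2 h
  exact ((PiLp.continuousLinearEquiv 2 ℝ
    (fun _ : Fin 3 => ℝ)).symm.toContinuousLinearMap).hasFDerivAt.comp_hasDerivAt t h'

theorem twistRate_quaternionic
    (q : ℝ → ℍ[ℝ]) (hq : ContDiff ℝ (⊤ : ℕ∞) q) (h0 : ∀ t, q t ≠ 0) (t : ℝ) :
    twistRate q t = -2 * innH (deriv q t) (qI * q t) / ‖q t‖ ^ 4 := by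
  have hq' : HasDerivAt q (deriv q t) t := (hq.differentiable (by simp) t).hasDerivAt
  have hA : HasDerivAt (fun s => (q s).re) (deriv q t).re t := reLM.hasFDerivAt.comp_hasDerivAt t hq'
  have hB : HasDerivAt (fun s => (q s).imI) (deriv q t).imI t := imILM.hasFDerivAt.comp_hasDerivAt t hq'
  have hC : HasDerivAt (fun s => (q s).imJ) (deriv q t).imJ t := imJLM.hasFDerivAt.comp_hasDerivAt t hq'
  have hD : HasDerivAt (fun s => (q s).imK) (deriv q t).imK t := imKLM.hasFDerivAt.comp_hasDerivAt t hq'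
  have hns : ∀ s : ℝ, ‖q s‖ ^ 2 = (q s).re * (q s).re + (q s).imI * (q s).imI + (q s).imJ * (q s).imJ + (q s).imK * (q s).imK := by
    intro s
    rw [sq, ← Quaternion.normSq_eq_norm_mul_self, Quaternion.normSq_def']
    ring
  have hn0 : (0:ℝ) < (q t).re * (q t).re + (q t).imI * (q t).imI + (q t).imJ * (q t).imJ + (q t).imK * (q t).imK := by
    rw [← hns t]
    exact pow_pos (norm_pos_iff.mpr (h0 t)) 2
  have hn' : HasDerivAt (fun s => (q s).re * (q s).re + (q s).imI * (q s).imI + (q s).imJ * (q s).imJ + (q s).imK * (q s).imK) (((deriv q t).re * (q t).re + (q t).re * (deriv q t).re) + ((deriv q t).imI * (q t).imI + (q t).imI * (deriv q t).imI) + ((deriv q t).imJ * (q t).imJ + (q t).imJ * (deriv q t).imJ) + ((deriv q t).imK * (q t).imK + (q t).imK * (deriv q t).imK)) t :=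
    (((hA.mul hA).add (hB.mul hB)).add (hC.mul hC)).add (hD.mul hD)
  have e0 : (fun s => frameV q s 0) = fun s => (2 * ((q s).imI * (q s).imJ) + 2 * ((q s).re * (q s).imK)) / ((q s).re * (q s).re + (q s).imI * (q s).imI + (q s).imJ * (q s).imJ + (q s).imK * (q s).imK) := by
    funext s
    simp only [frameV, imPart, PiLp.smul_apply, PiLp.toLp_apply, Matrix.cons_val_zero, smul_eq_mul,
      Quaternion.imI_mul, Quaternion.re_mul, Quaternion.imJ_mul, Quaternion.imK_mul,
      Quaternion.re_star, Quaternion.imI_star, Quaternion.imJ_star, Quaternion.imK_star,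
      qJ_re, qJ_imI, qJ_imJ, qJ_imK, hns s]
    rw [div_eq_inv_mul]
    ring
  have e1 : (fun s => frameV q s 1) = fun s => ((q s).re * (q s).re - (q s).imI * (q s).imI + (q s).imJ * (q s).imJ - (q s).imK * (q s).imK) / ((q s).re * (q s).re + (q s).imI * (q s).imI + (q s).imJ * (q s).imJ + (q s).imK * (q s).imK) := by
    funext s
    simp only [frameV, imPart, PiLp.smul_apply, PiLp.toLp_apply, Matrix.cons_val_one, Matrix.cons_val_zero, Matrix.head_cons,
      smul_eq_mul,
      Quaternion.imI_mul, Quaternion.re_mul, Quaternion.imJ_mul, Quaternion.imK_mul,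
      Quaternion.re_star, Quaternion.imI_star, Quaternion.imJ_star, Quaternion.imK_star,
      qJ_re, qJ_imI, qJ_imJ, qJ_imK, hns s]
    rw [div_eq_inv_mul]
    ring
  have e2 : (fun s => frameV q s 2) = fun s => (2 * ((q s).imJ * (q s).imK) - 2 * ((q s).re * (q s).imI)) / ((q s).re * (q s).re + (q s).imI * (q s).imI + (q s).imJ * (q s).imJ + (q s).imK * (q s).imK) := by
    funext s
    simp only [frameV, imPart, PiLp.smul_apply, PiLp.toLp_apply, Matrix.cons_val_two, Matrix.tail_cons,
      Matrix.head_cons, smul_eq_mul,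
      Quaternion.imI_mul, Quaternion.re_mul, Quaternion.imJ_mul, Quaternion.imK_mul,
      Quaternion.re_star, Quaternion.imI_star, Quaternion.imJ_star, Quaternion.imK_star,
      qJ_re, qJ_imI, qJ_imJ, qJ_imK, hns s]
    rw [div_eq_inv_mul]
    ring
  have hW0 : HasDerivAt (fun s => 2 * ((q s).imI * (q s).imJ) + 2 * ((q s).re * (q s).imK)) (2 * ((deriv q t).imI * (q t).imJ + (q t).imI * (deriv q t).imJ) + 2 * ((deriv q t).re * (q t).imK + (q t).re * (deriv q t).imK)) t :=
    ((hB.mul hC).const_mul 2).add ((hA.mul hD).const_mul 2)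
  have hW1 : HasDerivAt (fun s => (q s).re * (q s).re - (q s).imI * (q s).imI + (q s).imJ * (q s).imJ - (q s).imK * (q s).imK) (((deriv q t).re * (q t).re + (q t).re * (deriv q t).re) - ((deriv q t).imI * (q t).imI + (q t).imI * (deriv q t).imI) + ((deriv q t).imJ * (q t).imJ + (q t).imJ * (deriv q t).imJ) - ((deriv q t).imK * (q t).imK + (q t).imK * (deriv q t).imK)) t :=
    (((hA.mul hA).sub (hB.mul hB)).add (hC.mul hC)).sub (hD.mul hD)
  have hW2 : HasDerivAt (fun s => 2 * ((q s).imJ * (q s).imK) - 2 * ((q s).re * (q s).imI)) (2 * ((deriv q t).imJ * (q t).imK + (q t).imJ * (deriv q t).imK) - 2 * ((deriv q t).re * (q t).imI + (q t).re * (deriv q t).imI)) t :=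
    ((hC.mul hD).const_mul 2).sub ((hA.mul hB).const_mul 2)
  have hVd : HasDerivAt (frameV q)
      (WithLp.toLp 2 ![((2 * ((deriv q t).imI * (q t).imJ + (q t).imI * (deriv q t).imJ) + 2 * ((deriv q t).re * (q t).imK + (q t).re * (deriv q t).imK)) * ((q t).re * (q t).re + (q t).imI * (q t).imI + (q t).imJ * (q t).imJ + (q t).imK * (q t).imK) - (2 * ((q t).imI * (q t).imJ) + 2 * ((q t).re * (q t).imK)) * (((deriv q t).re * (q t).re + (q t).re * (deriv q t).re) + ((deriv q t).imI * (q t).imI + (q t).imI * (deriv q t).imI) + ((deriv q t).imJ * (q t).imJ + (q t).imJ * (deriv q t).imJ) + ((deriv q t).imK * (q t).imK + (q t).imK * (deriv q t).imK))) / ((q t).re * (q t).re + (q t).imI * (q t).imI + (q t).imJ * (q t).imJ + (q t).imK * (q t).imK) ^ 2,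
         ((((deriv q t).re * (q t).re + (q t).re * (deriv q t).re) - ((deriv q t).imI * (q t).imI + (q t).imI * (deriv q t).imI) + ((deriv q t).imJ * (q t).imJ + (q t).imJ * (deriv q t).imJ) - ((deriv q t).imK * (q t).imK + (q t).imK * (deriv q t).imK)) * ((q t).re * (q t).re + (q t).imI * (q t).imI + (q t).imJ * (q t).imJ + (q t).imK * (q t).imK) - ((q t).re * (q t).re - (q t).imI * (q t).imI + (q t).imJ * (q t).imJ - (q t).imK * (q t).imK) * (((deriv q t).re * (q t).re + (q t).re * (deriv q t).re) + ((deriv q t).imI * (q t).imI + (q t).imI * (deriv q t).imI) + ((deriv q t).imJ * (q t).imJ + (q t).imJ * (deriv q t).imJ) + ((deriv q t).imK * (q t).imK + (q t).imK * (deriv q t).imK))) / ((q t).re * (q t).re + (q t).imI * (q t).imI + (q t).imJ * (q t).imJ + (q t).imK * (q t).imK) ^ 2,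
         ((2 * ((deriv q t).imJ * (q t).imK + (q t).imJ * (deriv q t).imK) - 2 * ((deriv q t).re * (q t).imI + (q t).re * (deriv q t).imI)) * ((q t).re * (q t).re + (q t).imI * (q t).imI + (q t).imJ * (q t).imJ + (q t).imK * (q t).imK) - (2 * ((q t).imJ * (q t).imK) - 2 * ((q t).re * (q t).imI)) * (((deriv q t).re * (q t).re + (q t).re * (deriv q t).re) + ((deriv q t).imI * (q t).imI + (q t).imI * (deriv q t).imI) + ((deriv q t).imJ * (q t).imJ + (q t).imJ * (deriv q t).imJ) + ((deriv q t).imK * (q t).imK + (q t).imK * (deriv q t).imK))) / ((q t).re * (q t).re + (q t).imI * (q t).imI + (q t).imJ * (q t).imJ + (q t).imK * (q t).imK) ^ 2] : EuclideanSpace ℝ (Fin 3)) t := by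
    apply hasDerivAt_E3
    intro i
    fin_cases i
    · show HasDerivAt (fun s => frameV q s 0) (((2 * ((deriv q t).imI * (q t).imJ + (q t).imI * (deriv q t).imJ) + 2 * ((deriv q t).re * (q t).imK + (q t).re * (deriv q t).imK)) * ((q t).re * (q t).re + (q t).imI * (q t).imI + (q t).imJ * (q t).imJ + (q t).imK * (q t).imK) - (2 * ((q t).imI * (q t).imJ) + 2 * ((q t).re * (q t).imK)) * (((deriv q t).re * (q t).re + (q t).re * (deriv q t).re) + ((deriv q t).imI * (q t).imI + (q t).imI * (deriv q t).imI) + ((deriv q t).imJ * (q t).imJ + (q t).imJ * (deriv q t).imJ) + ((deriv q t).imK * (q t).imK + (q t).imK * (deriv q t).imK))) / ((q t).re * (q t).re + (q t).imI * (q t).imI + (q t).imJ * (q t).imJ + (q t).imK * (q t).imK) ^ 2) t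
      rw [e0]; exact hW0.div hn' hn0.ne'
    · show HasDerivAt (fun s => frameV q s 1) (((((deriv q t).re * (q t).re + (q t).re * (deriv q t).re) - ((deriv q t).imI * (q t).imI + (q t).imI * (deriv q t).imI) + ((deriv q t).imJ * (q t).imJ + (q t).imJ * (deriv q t).imJ) - ((deriv q t).imK * (q t).imK + (q t).imK * (deriv q t).imK)) * ((q t).re * (q t).re + (q t).imI * (q t).imI + (q t).imJ * (q t).imJ + (q t).imK * (q t).imK) - ((q t).re * (q t).re - (q t).imI * (q t).imI + (q t).imJ * (q t).imJ - (q t).imK * (q t).imK) * (((deriv q t).re * (q t).re + (q t).re * (deriv q t).re) + ((deriv q t).imI * (q t).imI + (q t).imI * (deriv q t).imI) + ((deriv q t).imJ * (q t).imJ + (q t).imJ * (deriv q t).imJ) + ((deriv q t).imK * (q t).imK + (q t).imK * (deriv q t).imK))) / ((q t).re * (q t).re + (q t).imI * (q t).imI + (q t).imJ * (q t).imJ + (q t).imK * (q t).imK) ^ 2) t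
      rw [e1]; exact hW1.div hn' hn0.ne'
    · show HasDerivAt (fun s => frameV q s 2) (((2 * ((deriv q t).imJ * (q t).imK + (q t).imJ * (deriv q t).imK) - 2 * ((deriv q t).re * (q t).imI + (q t).re * (deriv q t).imI)) * ((q t).re * (q t).re + (q t).imI * (q t).imI + (q t).imJ * (q t).imJ + (q t).imK * (q t).imK) - (2 * ((q t).imJ * (q t).imK) - 2 * ((q t).re * (q t).imI)) * (((deriv q t).re * (q t).re + (q t).re * (deriv q t).re) + ((deriv q t).imI * (q t).imI + (q t).imI * (deriv q t).imI) + ((deriv q t).imJ * (q t).imJ + (q t).imJ * (deriv q t).imJ) + ((deriv q t).imK * (q t).imK + (q t).imK * (deriv q t).imK))) / ((q t).re * (q t).re + (q t).imI * (q t).imI + (q t).imJ * (q t).imJ + (q t).imK * (q t).imK) ^ 2) t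
      rw [e2]; exact hW2.div hn' hn0.ne'
  have hderiv := hVd.deriv
  have hspeed : speed q t = (q t).re * (q t).re + (q t).imI * (q t).imI + (q t).imJ * (q t).imJ + (q t).imK * (q t).imK := by
    have h1 : speed q t ^ 2 = ((q t).re * (q t).re + (q t).imI * (q t).imI + (q t).imJ * (q t).imJ + (q t).imK * (q t).imK) ^ 2 := by
      rw [speed, ← real_inner_self_eq_norm_sq, PiLp.inner_apply, Fin.sum_univ_three]
      simp only [gammaDeriv, imPart, PiLp.toLp_apply, Matrix.cons_val_zero, Matrix.cons_val_one,
        Matrix.head_cons, Matrix.cons_val_two, Matrix.tail_cons, RCLike.inner_apply,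
        conj_trivial,
        Quaternion.imI_mul, Quaternion.re_mul, Quaternion.imJ_mul, Quaternion.imK_mul,
        Quaternion.re_star, Quaternion.imI_star, Quaternion.imJ_star, Quaternion.imK_star,
        qI_re, qI_imI, qI_imJ, qI_imK]
      ring
    nlinarith [norm_nonneg (gammaDeriv q t), hn0, h1,
      (show speed q t = ‖gammaDeriv q t‖ from rfl)]
  have h4 : ‖q t‖ ^ 4 = ((q t).re * (q t).re + (q t).imI * (q t).imI + (q t).imJ * (q t).imJ + (q t).imK * (q t).imK) ^ 2 := by
    rw [show (4:ℕ) = 2 * 2 from rfl, pow_mul, hns t]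
  rw [twistRate, hderiv, hspeed, h4, innH]
  simp only [PiLp.inner_apply, RCLike.inner_apply, conj_trivial, Fin.sum_univ_three,
    PiLp.smul_apply, PiLp.toLp_apply, smul_eq_mul, cross3, gammaDeriv, frameV, imPart,
    Matrix.cons_val_zero, Matrix.cons_val_one, Matrix.head_cons, Matrix.cons_val_two,
    Matrix.tail_cons,
    Quaternion.imI_mul, Quaternion.re_mul, Quaternion.imJ_mul, Quaternion.imK_mul,
    Quaternion.re_star, Quaternion.imI_star, Quaternion.imJ_star, Quaternion.imK_star,
    qI_re, qI_imI, qI_imJ, qI_imK, qJ_re, qJ_imI, qJ_imJ, qJ_imK, hns t]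
  have hN2 : (q t).re ^ 2 + (q t).imI ^ 2 + (q t).imJ ^ 2 + (q t).imK ^ 2 ≠ 0 := by nlinarith [hn0]
  field_simp
  ring
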